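/- Let A be a countable homomorphism-homogeneous relational structure such that Age(A) projects onto C_A. Then A has a core C with Age(C) = C_A; moreover, every homomorphism from C to A is an embedding. -/

import Mathlib

open FirstOrder FirstOrder.Language FirstOrder.Language.Structure CategoryTheory

universe u v w w' w'' w'''

/-- A first-order homomorphism is an embedding if it agrees pointwise with some embedding. -/
def IsHomEmbedding {L : FirstOrder.Language} {M N : Type*} [L.Structure M] [L.Structure N]
    (f : M →[L] N) : Prop :=
  ∃ e : M ↪[L] N, ∀ x, e x = f x

/-- A structure is weakly oligomorphic if for every arity `n` there are only finitely many
relations on `n`-tuples invariant under all endomorphisms. -/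
def WeaklyOligomorphic (L : FirstOrder.Language) (M : Type*) [L.Structure M] : Prop :=
  ∀ n : ℕ, {ρ : Set (Fin n → M) | ∀ f : M →[L] M, ∀ a ∈ ρ, f ∘ a ∈ ρ}.Finite

/-- A structure is homomorphism-homogeneous if every homomorphism from a finite substructure
into the structure extends to an endomorphism. -/
def HomHomogeneous (L : FirstOrder.Language) (M : Type*) [L.Structure M] : Prop :=
  ∀ S : L.Substructure M, (S : Set M).Finite →
    ∀ f : S →[L] M, ∃ g : M →[L] M, ∀ x : S, g (x : M) = f x

/-- A structure is weakly homomorphism-homogeneous if for finite substructures `B ≤ C`, every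
homomorphism from `B` into the structure extends to a homomorphism from `C`. -/
def WeaklyHomHomogeneous (L : FirstOrder.Language) (M : Type*) [L.Structure M] : Prop :=
  ∀ (B C : L.Substructure M) (h : B ≤ C), (C : Set M).Finite →
    ∀ f : B →[L] M, ∃ g : C →[L] M, ∀ x : B, g (Substructure.inclusion h x) = f x

/-- The age of a structure: the class of all finite structures embeddable into it. -/
def Age.{u₁, v₁, w₁, w₂} (L : FirstOrder.Language.{u₁, v₁}) (M : Type w₂) [L.Structure M] :
    Set (Bundled.{w₁} L.Structure) :=
  {N | Finite N ∧ Nonempty (N ↪[L] M)}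

/-- A class of structures projects onto another if every member of the first admits a
homomorphism to some member of the second. -/
def ProjectsOnto (L : FirstOrder.Language.{u, v}) (C D : Set (Bundled.{w} L.Structure)) : Prop :=
  ∀ A ∈ C, ∃ B ∈ D, Nonempty (A →[L] B)

/-- The hereditary property: a class is closed under (isomorphic copies of) substructures of
its members, i.e. closed under embeddability. -/
def HasHP (L : FirstOrder.Language.{u, v}) (C : Set (Bundled.{w} L.Structure)) : Prop :=
  ∀ A ∈ C, ∀ B : Bundled.{w} L.Structure, Nonempty (B ↪[L] A) → B ∈ C

/-- The joint embedding property. -/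
def HasJEP (L : FirstOrder.Language.{u, v}) (C : Set (Bundled.{w} L.Structure)) : Prop :=
  ∀ A ∈ C, ∀ B ∈ C, ∃ D ∈ C, Nonempty (A ↪[L] D) ∧ Nonempty (B ↪[L] D)

/-- The amalgamation property. -/
def HasAP (L : FirstOrder.Language.{u, v}) (C : Set (Bundled.{w} L.Structure)) : Prop :=
  ∀ A ∈ C, ∀ B₁ ∈ C, ∀ B₂ ∈ C, ∀ (f₁ : A ↪[L] B₁) (f₂ : A ↪[L] B₂),
    ∃ D ∈ C, ∃ (g₁ : B₁ ↪[L] D) (g₂ : B₂ ↪[L] D), ∀ a, g₁ (f₁ a) = g₂ (f₂ a)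

/-- The homo-amalgamation property: for every homomorphism `f₁ : A → B₁` and every embedding
`f₂ : A ↪ B₂` within the class there are `D` in the class, an embedding `g₁ : B₁ ↪ D` and a
homomorphism `g₂ : B₂ → D` with `g₁ ∘ f₁ = g₂ ∘ f₂`. -/
def HasHAP (L : FirstOrder.Language.{u, v}) (C : Set (Bundled.{w} L.Structure)) : Prop :=
  ∀ A ∈ C, ∀ B₁ ∈ C, ∀ B₂ ∈ C, ∀ (f₁ : A →[L] B₁) (f₂ : A ↪[L] B₂),
    ∃ D ∈ C, ∃ (g₁ : B₁ ↪[L] D) (g₂ : B₂ →[L] D), ∀ a, g₁ (f₁ a) = g₂ (f₂ a)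

/-- Closure under isomorphism. -/
def IsoClosed (L : FirstOrder.Language.{u, v}) (C : Set (Bundled.{w} L.Structure)) : Prop :=
  ∀ A ∈ C, ∀ B : Bundled.{w} L.Structure, Nonempty (A ≃[L] B) → B ∈ C

/-- A structure is hom-irreducible in a class if every homomorphism from it to a member of
the class is an embedding. -/
def HomIrreducibleIn (L : FirstOrder.Language.{u, v}) (C : Set (Bundled.{w} L.Structure))
    (A : Type*) [L.Structure A] : Prop :=
  ∀ B ∈ C, ∀ f : A →[L] B, IsHomEmbedding f

/-- `CA L M` is the class of all finite structures in the age of `M` that are hom-irreducible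
in the age of `M`. -/
def CA.{u₁, v₁, w₁, w₂} (L : FirstOrder.Language.{u₁, v₁}) (M : Type w₂) [L.Structure M] :
    Set (Bundled.{w₁} L.Structure) :=
  {B | B ∈ Age.{u₁, v₁, w₁, w₂} L M ∧
    HomIrreducibleIn.{u₁, v₁, w₁, w₁} L (Age.{u₁, v₁, w₁, w₂} L M) B}

/-- `M ⪯_h N` : the age of `N` is contained in the age of `M`, and for all finite
substructures `A ≤ B` of `M`, every homomorphism from `A` to `N` extends to `B`. -/
def PrecH.{u₁, v₁, w₁, w₂, w₃} (L : FirstOrder.Language.{u₁, v₁}) (M : Type w₂) (N : Type w₃)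
    [L.Structure M] [L.Structure N] : Prop :=
  Age.{u₁, v₁, w₁, w₃} L N ⊆ Age.{u₁, v₁, w₁, w₂} L M ∧
  ∀ (A B : L.Substructure M) (h : A ≤ B), (B : Set M).Finite →
    ∀ f : A →[L] N, ∃ g : B →[L] N, ∀ x : A, g (Substructure.inclusion h x) = f x

/-- A structure is (ultra)homogeneous if every isomorphism between finite substructures
(i.e. every embedding of a finite substructure into the structure) extends to an
automorphism. -/
def Ultrahomogeneous (L : FirstOrder.Language) (M : Type*) [L.Structure M] : Prop :=
  ∀ S : L.Substructure M, (S : Set M).Finite →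
    ∀ f : S ↪[L] M, ∃ g : M ≃[L] M, ∀ x : S, g (x : M) = f x

/-- A structure is oligomorphic if for every `n` its automorphism group has finitely many
orbits on `n`-tuples. -/
def Oligomorphic (L : FirstOrder.Language) (M : Type*) [L.Structure M] : Prop :=
  ∀ n : ℕ, ∃ S : Set (Fin n → M), S.Finite ∧
    ∀ a : Fin n → M, ∃ b ∈ S, ∃ g : M ≃[L] M, (fun i => g (b i)) = a

/-- A structure is a core if every endomorphism is an embedding. -/
def IsCore (L : FirstOrder.Language) (M : Type*) [L.Structure M] : Prop :=
  ∀ f : M →[L] M, IsHomEmbedding f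

/-- A substructure `C` is a core of `M` if `C` is a core and some endomorphism of `M` has
image contained in `C`. -/
def IsCoreOf (L : FirstOrder.Language) (M : Type*) [L.Structure M]
    (C : L.Substructure M) : Prop :=
  IsCore L C ∧ ∃ f : M →[L] M, ∀ x, f x ∈ C

/-- The constraint satisfaction problem of `M`: the class of all finite structures admitting
a homomorphism to `M`. -/
def CSP.{u₁, v₁, w₁, w₂} (L : FirstOrder.Language.{u₁, v₁}) (M : Type w₂) [L.Structure M] :
    Set (Bundled.{w₁} L.Structure) :=
  {C | Finite C ∧ Nonempty (C →[L] M)}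

/-- `f` is an `n`-ary polymorphism of `M`, i.e. a homomorphism from the `n`-th direct power
of `M` to `M`. -/
def IsPolymorphism (L : FirstOrder.Language) {M : Type*} [L.Structure M] {n : ℕ}
    (f : (Fin n → M) → M) : Prop :=
  ∀ {m : ℕ} (R : L.Relations m) (x : Fin n → Fin m → M),
    (∀ j, RelMap R (x j)) → RelMap R (fun i => f (fun j => x j i))


set_option linter.unusedSectionVars false

section AuxDev

variable {L : FirstOrder.Language.{u, v}} [L.IsRelational]
variable {M : Type w'} [L.Structure M]

/-- In a relational language, every subset is a substructure. -/
def relSub (L : FirstOrder.Language.{u, v}) [L.IsRelational] {M : Type w'} [L.Structure M]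
    (s : Set M) : L.Substructure M :=
  ⟨s, fun f => isEmptyElim f⟩

/-- Every finite structure embedded in `M` has a bundled copy in universe `w`
belonging to the age of `M`. -/
lemma exists_bundled_copy {A : Type w''} [L.Structure A] [Finite A] (emb : A ↪[L] M) :
    ∃ B ∈ Age.{u, v, w, w'} L M, Nonempty (A ≃[L] (B : Type w)) := by
  obtain ⟨n, ⟨e⟩⟩ := Finite.exists_equiv_fin A
  let q : A ≃ ULift.{w} (Fin n) := e.trans Equiv.ulift.symm
  letI : L.Structure (ULift.{w} (Fin n)) := q.inducedStructure
  let j : A ≃[L] ULift.{w} (Fin n) := @Equiv.inducedStructureEquiv L A _ _ q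
  refine ⟨Bundled.of (ULift.{w} (Fin n)),
    ⟨inferInstanceAs (Finite (ULift.{w} (Fin n))), ⟨emb.comp j.symm.toEmbedding⟩⟩, ⟨j⟩⟩

/-- A homomorphism from a finite structure, hom-irreducible in the age of `M`, to `M` is
an embedding. -/
lemma homIrr_isHomEmbedding {A : Type w''} [L.Structure A] [Finite A]
    (hA : HomIrreducibleIn.{u, v, w, w''} L (Age.{u, v, w, w'} L M) A)
    (f : A →[L] M) : IsHomEmbedding f := by
  haveI : Finite ↥(relSub L (Set.range f)) := (Set.finite_range ⇑f).to_subtype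
  obtain ⟨B, hB, ⟨j⟩⟩ := exists_bundled_copy (M := M) (relSub L (Set.range ⇑f)).subtype
  let f' : A →[L] ↥(relSub L (Set.range ⇑f)) :=
    Hom.codRestrict _ f (fun a => Set.mem_range_self a)
  obtain ⟨e, he⟩ := hA B hB (j.toHom.comp f')
  refine ⟨((relSub L (Set.range ⇑f)).subtype.comp j.symm.toEmbedding).comp e, fun x => ?_⟩
  have h1 := he x
  show ((relSub L (Set.range ⇑f)).subtype (j.symm (e x)) : M) = f x
  rw [h1]
  show ((j.symm (j (f' x))) : M) = f x
  rw [j.symm_apply_apply]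
  rfl

/-- `GoodSub S` : every homomorphism from `S` to `M` is an embedding. -/
def GoodSub (S : L.Substructure M) : Prop := ∀ f : S →[L] M, IsHomEmbedding f

lemma goodSub_congr {S T : L.Substructure M} (h : S = T) (hS : GoodSub S) : GoodSub T :=
  h ▸ hS

lemma goodSub_empty : GoodSub (relSub L (∅ : Set M)) := by
  intro f
  refine ⟨⟨⟨⇑f, fun a b _ => absurd a.2 (Set.notMem_empty _)⟩,
    fun {n} F x => isEmptyElim F, ?_⟩, fun x => rfl⟩
  intro n r x
  have hx : ⇑f ∘ x = Subtype.val ∘ x := funext fun i => absurd (x i).2 (Set.notMem_empty _)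
  show RelMap r (⇑f ∘ x) ↔ RelMap r x
  rw [hx]
  exact Iff.rfl

lemma goodSub_range {A : Type w''} [L.Structure A] [Finite A]
    (hA : HomIrreducibleIn.{u, v, w, w''} L (Age.{u, v, w, w'} L M) A)
    (e : A ↪[L] M) : GoodSub e.toHom.range := by
  intro f
  obtain ⟨em, hem⟩ := homIrr_isHomEmbedding hA (f.comp e.equivRange.toHom)
  refine ⟨em.comp e.equivRange.symm.toEmbedding, fun y => ?_⟩
  have h1 := hem (e.equivRange.symm y)
  show em (e.equivRange.symm y) = f y
  rw [h1]
  show f (e.equivRange (e.equivRange.symm y)) = f y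
  rw [e.equivRange.apply_symm_apply]


lemma key_step (hhh : HomHomogeneous L M)
    (hproj : ProjectsOnto L (Age.{u, v, w, w'} L M) (CA.{u, v, w, w'} L M))
    (H : Set M) (hfin : H.Finite) (hgood : GoodSub (relSub L H)) (b : M) :
    ∃ (t : M →[L] M) (H' : Set M), H'.Finite ∧ GoodSub (relSub L H') ∧ H ⊆ H' ∧
      (∀ x ∈ H, t x = x) ∧ t b ∈ H' := by
  classical
  set B : Set M := insert b H with hBdef
  have hBfin : B.Finite := hfin.insert b
  haveI : Finite ↥(relSub L B) := hBfin.to_subtype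
  haveI : Finite ↥(relSub L H) := hfin.to_subtype
  obtain ⟨B', hB', ⟨j⟩⟩ := exists_bundled_copy (M := M) (relSub L B).subtype
  obtain ⟨D, hD, ⟨φ⟩⟩ := hproj B' hB'
  obtain ⟨hDfin, ⟨ε⟩⟩ := hD.1
  haveI : Finite D := hDfin
  let ψ : ↥(relSub L B) →[L] M := ε.toHom.comp (φ.comp j.toHom)
  obtain ⟨s, hs⟩ := hhh (relSub L B) hBfin ψ
  have hHB : relSub L H ≤ relSub L B := fun x hx => Set.mem_insert_of_mem b hx
  let ψ₀ : ↥(relSub L H) →[L] M := ψ.comp (Substructure.inclusion hHB).toHom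
  obtain ⟨θ, hθ⟩ := hgood ψ₀
  have hrangefin : ((θ.toHom.range : L.Substructure M) : Set M).Finite := by
    rw [Hom.range_coe]
    exact Set.finite_range _
  obtain ⟨r, hr⟩ := hhh θ.toHom.range hrangefin
    ((relSub L H).subtype.toHom.comp θ.equivRange.symm.toHom)
  have hrθ : ∀ x : ↥(relSub L H), r (θ x) = (x : M) := by
    intro x
    have h1 := hr (θ.equivRange x)
    have h2 : ((θ.equivRange x : ↥θ.toHom.range) : M) = θ x := rfl
    rw [h2] at h1
    rw [h1]
    show ((θ.equivRange.symm (θ.equivRange x) : ↥(relSub L H)) : M) = (x : M)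
    rw [θ.equivRange.symm_apply_apply]
  obtain ⟨eD, heD⟩ := homIrr_isHomEmbedding hD.2 (r.comp ε.toHom)
  -- the value of `r ∘ s` on `B`
  have hval : ∀ (x : M) (hx : x ∈ B), (r.comp s) x = r (ε (φ (j ⟨x, hx⟩))) := by
    intro x hx
    show r (s x) = _
    have := hs ⟨x, hx⟩
    rw [this]
    rfl
  have hfix : ∀ x ∈ H, (r.comp s) x = x := by
    intro x hx
    have hxB : x ∈ B := Set.mem_insert_of_mem b hx
    have h1 : (r.comp s) x = r (ψ ⟨x, hxB⟩) := by
      show r (s x) = _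
      rw [hs ⟨x, hxB⟩]
    have h2 : ψ ⟨x, hxB⟩ = ψ₀ ⟨x, hx⟩ := by
      show ψ ⟨x, hxB⟩ = ψ ((Substructure.inclusion hHB) ⟨x, hx⟩)
      congr 1
    rw [h1, h2, ← hθ ⟨x, hx⟩, hrθ ⟨x, hx⟩]
  refine ⟨r.comp s, Set.range (fun d : D => r (ε d)), Set.finite_range _, ?_, ?_, hfix, ?_⟩
  · refine goodSub_congr ?_ (goodSub_range hD.2 eD)
    ext x
    simp only [Hom.mem_range]
    constructor
    · rintro ⟨d, rfl⟩
      exact ⟨d, (heD d).symm⟩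
    · rintro ⟨d, rfl⟩
      exact ⟨d, heD d⟩
  · intro x hx
    have h1 := hfix x hx
    rw [← h1, hval x (Set.mem_insert_of_mem b hx)]
    exact ⟨φ (j ⟨x, Set.mem_insert_of_mem b hx⟩), rfl⟩
  · rw [hval b (Set.mem_insert b H)]
    exact ⟨φ (j ⟨b, Set.mem_insert b H⟩), rfl⟩


lemma exists_limit (hhh : HomHomogeneous L M)
    (hproj : ProjectsOnto L (Age.{u, v, w, w'} L M) (CA.{u, v, w, w'} L M))
    (u : ℕ → M) (hu : Function.Surjective u) :
    ∃ (H : ℕ → Set M) (p : M →[L] M), (∀ n, H n ⊆ H (n + 1)) ∧ (∀ n, (H n).Finite) ∧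
      (∀ n, GoodSub (relSub L (H n))) ∧ (∀ x, p x ∈ ⋃ n, H n) := by
  classical
  choose t H' hfin' hgood' hsub' hfix' hmem' using
    fun (c : {c : Set M // c.Finite ∧ GoodSub (relSub L c)}) (b : M) =>
      key_step hhh hproj c.1 c.2.1 c.2.2 b
  let F : ℕ → (M →[L] M) × {c : Set M // c.Finite ∧ GoodSub (relSub L c)} :=
    fun n => Nat.rec (⟨Hom.id L M, ⟨∅, Set.finite_empty, goodSub_empty⟩⟩)
      (fun n p => ⟨(t p.2 (p.1 (u n))).comp p.1,
        ⟨H' p.2 (p.1 (u n)), hfin' _ _, hgood' _ _⟩⟩) n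
  have hF : ∀ n, F (n + 1) = ⟨(t (F n).2 ((F n).1 (u n))).comp (F n).1,
      ⟨H' (F n).2 ((F n).1 (u n)), hfin' _ _, hgood' _ _⟩⟩ := fun n => rfl
  set g : ℕ → (M →[L] M) := fun n => (F n).1 with hg
  set Hs : ℕ → Set M := fun n => (F n).2.1 with hHs
  have hgsucc : ∀ n, g (n + 1) = (t (F n).2 (g n (u n))).comp (g n) := fun n => rfl
  have hssucc : ∀ n, Hs (n + 1) = H' (F n).2 (g n (u n)) := fun n => rfl
  have hsub : ∀ n, Hs n ⊆ Hs (n + 1) := by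
    intro n
    rw [hssucc n]
    exact hsub' (F n).2 (g n (u n))
  have hmem : ∀ n i, i < n → g n (u i) ∈ Hs n := by
    intro n
    induction n with
    | zero => intro i hi; omega
    | succ n ih =>
      intro i hi
      rw [hgsucc n, hssucc n]
      show t (F n).2 (g n (u n)) (g n (u i)) ∈ _
      rcases Nat.lt_succ_iff_lt_or_eq.1 hi with hi' | heq
      · have h1 : g n (u i) ∈ Hs n := ih i hi'
        rw [hfix' (F n).2 (g n (u n)) (g n (u i)) h1]
        exact hsub' (F n).2 (g n (u n)) h1
      · subst heq
        exact hmem' _ _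
  have hagree : ∀ n i, i < n → g (n + 1) (u i) = g n (u i) := by
    intro n i hi
    rw [hgsucc n]
    show t (F n).2 (g n (u n)) (g n (u i)) = g n (u i)
    exact hfix' (F n).2 (g n (u n)) (g n (u i)) (hmem n i hi)
  have hagree' : ∀ i n m, i < n → n ≤ m → g m (u i) = g n (u i) := by
    intro i n m hi hnm
    induction m, hnm using Nat.le_induction with
    | base => rfl
    | succ m' hm' ih =>
      rw [← ih]
      exact hagree m' i (lt_of_lt_of_le hi hm')
  have hux : ∀ x : M, ∃ i, u i = x := fun x => hu x
  let idx : M → ℕ := fun x => Nat.find (hux x)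
  have hidx : ∀ x, u (idx x) = x := fun x => Nat.find_spec (hux x)
  let pf : M → M := fun x => g (idx x + 1) x
  have hpval : ∀ (x : M) (N : ℕ), idx x < N → g N x = pf x := by
    intro x N hN
    show g N x = g (idx x + 1) x
    have h1 := hagree' (idx x) (idx x + 1) N (Nat.lt_succ_self _) hN
    rwa [hidx x] at h1
  have hhom : ∀ {m : ℕ} (rel : L.Relations m) (xs : Fin m → M),
      RelMap rel xs → RelMap rel (pf ∘ xs) := by
    intro m rel xs hxs
    set N : ℕ := (Finset.univ.sup fun j => idx (xs j)) + 1 with hN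
    have hcomp : pf ∘ xs = ⇑(g N) ∘ xs := funext fun j => by
      have hj : idx (xs j) < N := Nat.lt_succ_of_le (Finset.le_sup (f := fun j => idx (xs j)) (Finset.mem_univ j))
      exact (hpval (xs j) N hj).symm
    rw [hcomp]
    exact (g N).map_rel' rel xs hxs
  refine ⟨Hs, ⟨pf, fun {n} f x => isEmptyElim f, hhom⟩, hsub, fun n => (F n).2.2.1,
    fun n => (F n).2.2.2, ?_⟩
  intro x
  have h1 : pf x ∈ Hs (idx x + 1) := by
    show g (idx x + 1) x ∈ _
    have h2 := hmem (idx x + 1) (idx x) (Nat.lt_succ_self _)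
    rwa [hidx x] at h2
  exact Set.mem_iUnion.2 ⟨idx x + 1, h1⟩


lemma assemble (hhh : HomHomogeneous L M) (H : ℕ → Set M)
    (hsub : ∀ n, H n ⊆ H (n + 1)) (hfin : ∀ n, (H n).Finite)
    (hgood : ∀ n, GoodSub (relSub L (H n)))
    (p : M →[L] M) (hp : ∀ x, p x ∈ ⋃ n, H n) :
    ∃ C : L.Substructure M, IsCoreOf L M C ∧
      Age.{u, v, w, w'} L C = CA.{u, v, w, w'} L M ∧
      ∀ f : C →[L] M, IsHomEmbedding f := by
  classical
  have hmono : ∀ {a b : ℕ}, a ≤ b → H a ⊆ H b := by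
    intro a b hab
    induction b, hab using Nat.le_induction with
    | base => exact subset_rfl
    | succ b' hb' ih => exact ih.trans (hsub b')
  have hfind : ∀ s : Set M, s.Finite → s ⊆ (⋃ n, H n) → ∃ n, s ⊆ H n := by
    intro s hs
    refine Set.Finite.induction_on (motive := fun s _ => s ⊆ (⋃ n, H n) → ∃ n, s ⊆ H n) s hs ?_ ?_
    · intro _
      exact ⟨0, Set.empty_subset _⟩
    · intro a s' _ _ ih hsub'
      obtain ⟨n₁, hn₁⟩ := Set.mem_iUnion.1 (hsub' (Set.mem_insert a s'))
      obtain ⟨n₂, hn₂⟩ := ih ((Set.subset_insert a s').trans hsub')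
      refine ⟨max n₁ n₂, Set.insert_subset (hmono (le_max_left n₁ n₂) hn₁)
        (hn₂.trans (hmono (le_max_right n₁ n₂)))⟩
  set C : L.Substructure M := relSub L (⋃ n, H n) with hC
  have hle : ∀ n, relSub L (H n) ≤ C := fun n x hx => Set.mem_iUnion.2 ⟨n, hx⟩
  -- every homomorphism from C to M is an embedding
  have hcore : ∀ f : ↥C →[L] M, IsHomEmbedding f := by
    intro f
    choose e he using fun n => hgood n (f.comp (Substructure.inclusion (hle n)).toHom)
    have key : ∀ n (z : ↥(relSub L (H n))), e n z = f ⟨(z : M), hle n z.2⟩ := by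
      intro n z
      have h1 := he n z
      exact h1.trans (congrArg f (Subtype.ext rfl))
    have hinj : Function.Injective ⇑f := by
      intro x y hxy
      obtain ⟨n₁, hx⟩ := Set.mem_iUnion.1 x.2
      obtain ⟨n₂, hy⟩ := Set.mem_iUnion.1 y.2
      have hx' : (x : M) ∈ H (max n₁ n₂) := hmono (le_max_left n₁ n₂) hx
      have hy' : (y : M) ∈ H (max n₁ n₂) := hmono (le_max_right n₁ n₂) hy
      have h1 : e (max n₁ n₂) ⟨(x : M), hx'⟩ = e (max n₁ n₂) ⟨(y : M), hy'⟩ := by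
        rw [key, key]
        show f ⟨(x : M), _⟩ = f ⟨(y : M), _⟩
        rw [show (⟨(x : M), hle (max n₁ n₂) hx'⟩ : ↥C) = x from Subtype.ext rfl,
          show (⟨(y : M), hle (max n₁ n₂) hy'⟩ : ↥C) = y from Subtype.ext rfl]
        exact hxy
      have h2 := (e (max n₁ n₂)).injective h1
      exact Subtype.ext (Subtype.mk_eq_mk.1 h2)
    refine ⟨⟨⟨⇑f, hinj⟩, fun {n} F x => isEmptyElim F, ?_⟩, fun x => rfl⟩
    intro m rel xs
    show RelMap rel (⇑f ∘ xs) ↔ RelMap rel xs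
    refine ⟨fun hrel => ?_, fun hrel => f.map_rel' rel xs hrel⟩
    choose nj hnj using fun j => Set.mem_iUnion.1 (xs j).2
    set N := Finset.univ.sup nj with hN
    have hmem' : ∀ j, ((xs j : M)) ∈ H N :=
      fun j => hmono (Finset.le_sup (f := nj) (Finset.mem_univ j)) (hnj j)
    have hcomp : ⇑f ∘ xs = ⇑(e N) ∘ (fun j => (⟨(xs j : M), hmem' j⟩ : ↥(relSub L (H N)))) := by
      funext j
      show f (xs j) = e N ⟨(xs j : M), hmem' j⟩
      rw [key N ⟨(xs j : M), hmem' j⟩]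
    rw [hcomp] at hrel
    exact ((e N).map_rel' rel _).1 hrel
  -- C is a core
  have hIsCore : IsCore L ↥C := by
    intro f
    obtain ⟨e, he⟩ := hcore (C.subtype.toHom.comp f)
    have he' : ∀ x, e x = (f x : M) := he
    have hinj : Function.Injective ⇑f := by
      intro x y hxy
      apply e.injective
      rw [he' x, he' y, hxy]
    have hcomp : ∀ {m : ℕ} (xs : Fin m → ↥C), Subtype.val ∘ (⇑f ∘ xs) = ⇑e ∘ xs :=
      fun xs => funext fun j => (he' (xs j)).symm
    refine ⟨⟨⟨⇑f, hinj⟩, fun {n} F x => isEmptyElim F, ?_⟩, fun x => rfl⟩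
    intro m rel xs
    show RelMap rel (⇑f ∘ xs) ↔ RelMap rel xs
    constructor
    · intro hrel
      have h1 : RelMap rel (Subtype.val ∘ (⇑f ∘ xs)) := hrel
      rw [hcomp xs] at h1
      exact (e.map_rel' rel xs).1 h1
    · intro hrel
      have h1 := (e.map_rel' rel xs).2 hrel
      show RelMap rel (Subtype.val ∘ (⇑f ∘ xs))
      rw [hcomp xs]
      exact h1
  -- the age of C is CA L M
  have hage : Age.{u, v, w, w'} L ↥C = CA.{u, v, w, w'} L M := by
    apply Set.Subset.antisymm
    · rintro N ⟨hNfin, ⟨ι⟩⟩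
      haveI : Finite ↥N := hNfin
      refine ⟨⟨hNfin, ⟨C.subtype.comp ι⟩⟩, ?_⟩
      rintro B ⟨hBfin, ⟨η⟩⟩ f
      set ι' : ↥N ↪[L] M := C.subtype.comp ι with hι'
      have hsr : Set.range ⇑ι' ⊆ ⋃ n, H n := by
        rintro _ ⟨x, rfl⟩
        exact (ι x).2
      obtain ⟨n, hsn⟩ := hfind _ (Set.finite_range _) hsr
      have hrfin : ((ι'.toHom.range : L.Substructure M) : Set M).Finite := by
        rw [Hom.range_coe]
        exact Set.finite_range _
      obtain ⟨g, hg⟩ := hhh ι'.toHom.range hrfin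
        ((η.toHom.comp f).comp ι'.equivRange.symm.toHom)
      obtain ⟨e, he⟩ := hgood n (g.comp (relSub L (H n)).subtype.toHom)
      have hx' : ∀ x : ↥N, ι' x ∈ H n := fun x => hsn (Set.mem_range_self x)
      have hmain : ∀ x : ↥N, η (f x) = e ⟨ι' x, hx' x⟩ := by
        intro x
        have h1 := hg (ι'.equivRange x)
        have h2 : ((ι'.equivRange x : ↥ι'.toHom.range) : M) = ι' x := rfl
        rw [h2] at h1
        have h3 : ((η.toHom.comp f).comp ι'.equivRange.symm.toHom) (ι'.equivRange x)
            = η (f x) := by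
          show η (f (ι'.equivRange.symm (ι'.equivRange x))) = η (f x)
          rw [ι'.equivRange.symm_apply_apply]
        rw [h3] at h1
        have h4 : e ⟨ι' x, hx' x⟩ = g (ι' x) := he ⟨ι' x, hx' x⟩
        rw [h4, h1]
      have hinjf : Function.Injective ⇑f := by
        intro a b hab
        have h1 : e ⟨ι' a, hx' a⟩ = e ⟨ι' b, hx' b⟩ := by
          rw [← hmain a, ← hmain b, hab]
        have h2 := e.injective h1
        have h3 : ι' a = ι' b := Subtype.mk_eq_mk.1 h2
        exact ι'.injective h3
      refine ⟨⟨⟨⇑f, hinjf⟩, fun {k} F xx => isEmptyElim F, ?_⟩, fun x => rfl⟩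
      intro m rel xs
      show RelMap rel (⇑f ∘ xs) ↔ RelMap rel xs
      refine ⟨fun hrel => ?_, fun hrel => f.map_rel' rel xs hrel⟩
      have h1 : RelMap rel (⇑η ∘ (⇑f ∘ xs)) := (η.map_rel' rel (⇑f ∘ xs)).2 hrel
      have hcomp : ⇑η ∘ (⇑f ∘ xs)
          = ⇑e ∘ (fun j => (⟨ι' (xs j), hx' (xs j)⟩ : ↥(relSub L (H n)))) :=
        funext fun j => hmain (xs j)
      rw [hcomp] at h1
      have h2 := (e.map_rel' rel _).1 h1
      exact (ι'.map_rel' rel xs).1 h2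
    · rintro D ⟨⟨hDfin, ⟨ε⟩⟩, hDirr⟩
      haveI : Finite ↥D := hDfin
      obtain ⟨e, he⟩ := homIrr_isHomEmbedding hDirr (p.comp ε.toHom)
      refine ⟨hDfin, ⟨FirstOrder.Language.Embedding.codRestrict C e fun d => ?_⟩⟩
      rw [he d]
      exact hp (ε d)
  exact ⟨C, ⟨hIsCore, p, fun x => hp x⟩, hage, hcore⟩

end AuxDev

/-- If `M` is a countable homomorphism-homogeneous structure whose age projects
onto `C_M`, then `M` has a core `C` with `Age C = C_M`; moreover every homomorphism from `C`
to `M` is an embedding. -/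
theorem stmt10 (L : FirstOrder.Language.{u, v}) [L.IsRelational]
    (M : Type w') [L.Structure M] [Countable M]
    (hhh : HomHomogeneous L M)
    (hproj : ProjectsOnto L (Age.{u, v, w, w'} L M) (CA.{u, v, w, w'} L M)) :
    ∃ C : L.Substructure M, IsCoreOf L M C ∧
      Age.{u, v, w, w'} L C = CA.{u, v, w, w'} L M ∧
      ∀ f : C →[L] M, IsHomEmbedding f := by
  classical
  by_cases hne : Nonempty M
  · obtain ⟨u, hu⟩ := exists_surjective_nat M
    obtain ⟨H, p, h1, h2, h3, h4⟩ := exists_limit hhh hproj u hu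
    exact assemble hhh H h1 h2 h3 p h4
  · haveI : IsEmpty M := not_nonempty_iff.1 hne
    exact assemble hhh (fun _ => ∅) (fun n => subset_rfl) (fun _ => Set.finite_empty)
      (fun _ => goodSub_empty) (Hom.id L M) (fun x => (IsEmpty.false x).elim)
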